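/- Let R = k[x_1,...,x_d] with k a field of characteristic 0, α ∈ Z_{≥0}^d, and I = (x_i^{α_i} : i ∈ supp(α)). If c is a rational number with c ≥ max{α_1,...,α_d}, c > |supp(α)|, and cn ∈ Z for a given positive integer n, then I^⟨cn⟩ ⊆ I^n. -/

import Mathlib

/-!
Write `r ∈ I^⟨cn⟩` as a sum of terms `a x^γ`; it suffices to put each `x^γ` into `I^n`.
Let `β_i = γ_i + 1 - α_i` for `α_i ≠ 0` (truncated at `0`) and `β_i = 0` otherwise. Then `∂^β r`
has the nonzero coefficient `γ!/(γ-β)! · a` at `x^(γ-β)` (characteristic `0`), and no generator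
`x_i^{α_i}` divides `x^(γ-β)`; as `I` is a monomial ideal, `∂^β r ∉ I`, so `∂^β` has order
`|β| ≥ cn`. Since `β_i ≤ α_i ⌊γ_i/α_i⌋ ≤ c ⌊γ_i/α_i⌋`, this gives `∑ ⌊γ_i/α_i⌋ ≥ n`, and
`x^γ` is divisible by a product of `n` generators.
-/

/-- `IsDiffOp A n φ` says that the `A`-linear endomorphism `φ` of `R` is an
`A`-linear differential operator of order at most `n`. -/
def IsDiffOp (A : Type*) {R : Type*} [CommRing A] [CommRing R] [Algebra A R] :
    ℕ → (R →ₗ[A] R) → Prop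
  | 0 => fun φ => ∃ r : R, φ = LinearMap.mulLeft A r
  | n + 1 => fun φ => ∀ a : R,
      IsDiffOp A n (φ ∘ₗ LinearMap.mulLeft A a - LinearMap.mulLeft A a ∘ₗ φ)

theorem isDiffOp_comp_mulLeft (A : Type*) {R : Type*} [CommRing A] [CommRing R]
    [Algebra A R] (x : R) (n : ℕ) :
    ∀ φ : R →ₗ[A] R, IsDiffOp A n φ → IsDiffOp A n (φ ∘ₗ LinearMap.mulLeft A x) := by
  induction n with
  | zero =>
    rintro φ ⟨r, rfl⟩
    exact ⟨r * x, by ext y; simp [mul_assoc]⟩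
  | succ n ih =>
    intro φ h a
    have h2 := ih _ (h a)
    have key : (φ ∘ₗ LinearMap.mulLeft A x) ∘ₗ LinearMap.mulLeft A a -
        LinearMap.mulLeft A a ∘ₗ (φ ∘ₗ LinearMap.mulLeft A x) =
        (φ ∘ₗ LinearMap.mulLeft A a - LinearMap.mulLeft A a ∘ₗ φ) ∘ₗ LinearMap.mulLeft A x := by
      ext y
      simp [mul_left_comm]
    rw [key]
    exact h2

/-- The `n`-th differential power of an ideal `I` of the `A`-algebra `R`:
the set of `r ∈ R` such that `∂ r ∈ I` for every `A`-linear differential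
operator `∂` of order at most `n - 1`. -/
def diffPow (A : Type*) {R : Type*} [CommRing A] [CommRing R] [Algebra A R]
    (n : ℕ) (I : Ideal R) : Ideal R where
  carrier := {r | ∀ φ : R →ₗ[A] R, IsDiffOp A (n - 1) φ → φ r ∈ I}
  add_mem' := fun hx hy φ hφ => by simp [map_add]; exact I.add_mem (hx φ hφ) (hy φ hφ)
  zero_mem' := fun φ _ => by simpa using I.zero_mem
  smul_mem' := fun c x hx => by
    intro φ hφ
    have := hx (φ ∘ₗ LinearMap.mulLeft A c) (isDiffOp_comp_mulLeft A c _ φ hφ)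
    simpa [smul_eq_mul] using this

namespace IsDiffOp

variable {A R : Type*} [CommRing A] [CommRing R] [Algebra A R]

theorem add {n : ℕ} {φ ψ : R →ₗ[A] R} (hφ : IsDiffOp A n φ) (hψ : IsDiffOp A n ψ) :
    IsDiffOp A n (φ + ψ) := by
  induction n generalizing φ ψ with
  | zero =>
    obtain ⟨r, rfl⟩ := hφ
    obtain ⟨s, rfl⟩ := hψ
    exact ⟨r + s, by ext; simp [add_mul]⟩
  | succ n ih =>
    intro a
    convert ih (hφ a) (hψ a) using 1
    ext; simp; ring

theorem succ {n : ℕ} {φ : R →ₗ[A] R} (hφ : IsDiffOp A n φ) : IsDiffOp A (n + 1) φ := by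
  induction n generalizing φ with
  | zero =>
    obtain ⟨r, rfl⟩ := hφ
    exact fun a => ⟨0, by ext; simp [mul_left_comm]⟩
  | succ n ih => exact fun a => ih (hφ a)

theorem mono {n m : ℕ} (h : n ≤ m) {φ : R →ₗ[A] R} (hφ : IsDiffOp A n φ) : IsDiffOp A m φ := by
  induction h with
  | refl => exact hφ
  | step _ ih => exact ih.succ

theorem mulLeft_comp {n : ℕ} {φ : R →ₗ[A] R} (hφ : IsDiffOp A n φ) (r : R) :
    IsDiffOp A n (LinearMap.mulLeft A r ∘ₗ φ) := by
  induction n generalizing φ with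
  | zero =>
    obtain ⟨s, rfl⟩ := hφ
    exact ⟨r * s, by ext; simp⟩
  | succ n ih =>
    intro a
    convert ih (hφ a) using 1
    ext; simp; ring

theorem derivation_comp (D : Derivation A R R) {n : ℕ} {φ : R →ₗ[A] R}
    (hφ : IsDiffOp A n φ) : IsDiffOp A (n + 1) ((D : R →ₗ[A] R) ∘ₗ φ) := by
  induction n generalizing φ with
  | zero =>
    obtain ⟨r, rfl⟩ := hφ
    exact fun a => ⟨r * D a, by ext; simp [Derivation.leibniz]; ring⟩
  | succ n ih =>
    intro a
    convert (ih (hφ a)).add (hφ.mulLeft_comp (D a)) using 1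
    ext; simp [Derivation.leibniz]; ring

end IsDiffOp

theorem Finsupp.single_one_add_le_iff {σ : Type*} [DecidableEq σ] {i : σ} {f v : σ →₀ ℕ} :
    single i 1 + f ≤ v ↔ f ≤ v ∧ f i < v i := by
  simp only [Finsupp.le_def, Finsupp.add_apply, single_apply]
  constructor
  · intro h
    exact ⟨fun j => (Nat.le_add_left _ _).trans (h j), by have := h i; simp at this; omega⟩
  · rintro ⟨h, hi⟩ j
    split_ifs with hj
    · subst hj; omega
    · simpa using h j

theorem Multiset.toFinsupp_cons {α : Type*} [DecidableEq α] (a : α) (s : Multiset α) :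
    toFinsupp (a ::ₘ s) = Finsupp.single a 1 + toFinsupp s := by
  rw [← singleton_add, toFinsupp_add, toFinsupp_singleton]

namespace MvPolynomial

open Finsupp

section CommSemiring

variable {R σ : Type*} [CommSemiring R]

noncomputable def pderivList : List σ → (MvPolynomial σ R →ₗ[R] MvPolynomial σ R)
  | [] => LinearMap.id
  | i :: L => (pderiv i : Derivation R _ _).toLinearMap ∘ₗ pderivList L

variable [DecidableEq σ]

def pderivListFactor : List σ → (σ →₀ ℕ) → ℕ
  | [], _ => 1
  | i :: L, v => pderivListFactor L v * (v i - L.count i)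

theorem pderivList_monomial (L : List σ) (v : σ →₀ ℕ) (a : R) :
    pderivList L (monomial v a) =
      monomial (v - Multiset.toFinsupp L) (a * pderivListFactor L v) := by
  induction L with
  | nil => simp [pderivList, pderivListFactor]
  | cons i L ih =>
    simp only [pderivList, LinearMap.comp_apply, ih, Derivation.coeFn_coe, pderiv_monomial,
      ← Multiset.cons_coe, Multiset.toFinsupp_cons, pderivListFactor, tsub_tsub,
      add_comm (single i 1)]
    congr 1
    simp [mul_assoc]

theorem pderivListFactor_eq_zero_iff (L : List σ) (v : σ →₀ ℕ) :
    pderivListFactor L v = 0 ↔ ¬ Multiset.toFinsupp L ≤ v := by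
  induction L with
  | nil => simp [pderivListFactor]
  | cons i L ih =>
    rw [pderivListFactor, mul_eq_zero, ih, ← Multiset.cons_coe, Multiset.toFinsupp_cons,
      single_one_add_le_iff, Multiset.toFinsupp_apply, Multiset.coe_count,
      Nat.sub_eq_zero_iff_le, not_and_or, not_lt]

theorem coeff_pderivList (L : List σ) (p : MvPolynomial σ R) {γ : σ →₀ ℕ}
    (h : Multiset.toFinsupp L ≤ γ) :
    coeff (γ - Multiset.toFinsupp L) (pderivList L p) = coeff γ p * pderivListFactor L γ := by
  induction p using MvPolynomial.induction_on' with
  | add p q hp hq => simp [hp, hq, add_mul]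
  | monomial v a =>
    rw [pderivList_monomial, coeff_monomial, coeff_monomial]
    by_cases hv : v = γ
    · simp [hv]
    · by_cases hLv : Multiset.toFinsupp L ≤ v
      · rw [if_neg (by rwa [tsub_left_inj hLv h]), if_neg hv, zero_mul]
      · simp [(pderivListFactor_eq_zero_iff L v).2 hLv, hv]

omit [DecidableEq σ]

theorem span_X_pow_eq_span_monomial (α : σ → ℕ) (T : Set σ) :
    Ideal.span ((fun i => (X i : MvPolynomial σ R) ^ α i) '' T) =
      Ideal.span ((fun s => monomial s (1 : R)) '' ((fun i => single i (α i)) '' T)) := by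
  simp_rw [Set.image_image, X_pow_eq_monomial]

theorem monomial_mem_span_X_pow_pow [Fintype σ] {α : σ → ℕ} {γ : σ →₀ ℕ} {n : ℕ}
    (h : n ≤ ∑ i, γ i / α i) (a : R) :
    monomial γ a ∈ Ideal.span ((fun i => (X i : MvPolynomial σ R) ^ α i) '' {i | α i ≠ 0}) ^ n := by
  set I := Ideal.span ((fun i => (X i : MvPolynomial σ R) ^ α i) '' {i | α i ≠ 0})
  set e := equivFunOnFinite.symm fun i => α i * (γ i / α i)
  have he (i : σ) : e i = α i * (γ i / α i) := rfl
  have heγ : e ≤ γ := fun i => by rw [he, mul_comm]; exact Nat.div_mul_le_self _ _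
  have hprod : (∏ i, (X i ^ α i) ^ (γ i / α i) : MvPolynomial σ R) ∈ I ^ ∑ i, γ i / α i := by
    rw [← Finset.prod_pow_eq_pow_sum]
    refine Ideal.prod_mem_prod fun i _ => ?_
    by_cases hq : γ i / α i = 0
    · simp [hq]
    · have hα : α i ≠ 0 := fun hα => hq (by rw [hα, Nat.div_zero])
      exact Ideal.pow_mem_pow (Ideal.subset_span (Set.mem_image_of_mem _ hα)) _
  have hsplit : monomial γ a = monomial (γ - e) a * ∏ i, (X i ^ α i) ^ (γ i / α i) :=
    calc monomial γ a = monomial (γ - e) a * monomial e 1 := by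
          rw [monomial_mul, mul_one, tsub_add_cancel_of_le heγ]
      _ = _ := by
          simp_rw [monomial_eq (s := e), C_1, one_mul, prod_fintype _ _ fun _ => pow_zero _, he,
            pow_mul]
  rw [hsplit]
  exact Ideal.pow_le_pow_right h (Ideal.mul_mem_left _ _ hprod)

end CommSemiring

section CommRing

variable {R σ : Type*} [CommRing R]

theorem isDiffOp_pderivList (L : List σ) :
    IsDiffOp R L.length (pderivList L : MvPolynomial σ R →ₗ[R] MvPolynomial σ R) := by
  induction L with
  | nil => exact ⟨1, by ext; simp [pderivList]⟩
  | cons i L ih => exact ih.derivation_comp (pderiv i)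

variable [NoZeroDivisors R] [CharZero R]

theorem exists_le_tsub_of_mem_diffPow {S : Set (σ →₀ ℕ)} {m : ℕ} {p : MvPolynomial σ R}
    (hp : p ∈ diffPow R m (Ideal.span ((fun s => monomial s (1 : R)) '' S)))
    {γ β : σ →₀ ℕ} (hγ : γ ∈ p.support) (hβγ : β ≤ γ) (hβ : β.degree ≤ m - 1) :
    ∃ s ∈ S, s ≤ γ - β := by
  classical
  set L := (toMultiset β).toList
  have hL : Multiset.toFinsupp L = β := by simp [L]
  have hord : IsDiffOp R (m - 1) (pderivList L) := by
    refine (isDiffOp_pderivList L).mono ?_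
    rwa [Multiset.length_toList, card_toMultiset]
  refine mem_ideal_span_monomial_image.1 (hp _ hord) (γ - β) ?_
  rw [mem_support_iff, ← hL, coeff_pderivList L p (hL ▸ hβγ)]
  refine mul_ne_zero (mem_support_iff.1 hγ) (Nat.cast_ne_zero.2 ?_)
  rw [Ne, pderivListFactor_eq_zero_iff, hL, not_not]
  exact hβγ

theorem sub_one_lt_sum_of_mem_diffPow [Fintype σ] {α : σ → ℕ} {m : ℕ} {p : MvPolynomial σ R}
    (hp : p ∈ diffPow R m (Ideal.span ((fun i => (X i : MvPolynomial σ R) ^ α i) '' {i | α i ≠ 0})))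
    {γ : σ →₀ ℕ} (hγ : γ ∈ p.support) :
    m - 1 < ∑ i, if α i = 0 then 0 else γ i + 1 - α i := by
  by_contra! h
  set β := equivFunOnFinite.symm fun i => if α i = 0 then 0 else γ i + 1 - α i
  have hβ (i : σ) : β i = if α i = 0 then 0 else γ i + 1 - α i := rfl
  rw [span_X_pow_eq_span_monomial] at hp
  have hβγ : β ≤ γ := fun i => by rw [hβ]; split_ifs <;> omega
  obtain ⟨_, ⟨i, hi : α i ≠ 0, rfl⟩, hle⟩ := exists_le_tsub_of_mem_diffPow hp hγ hβγ
    (by rwa [degree_eq_sum])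
  have := hle i
  rw [single_eq_same, tsub_apply, hβ, if_neg hi] at this
  omega

end CommRing

end MvPolynomial

theorem Nat.cast_ite_add_one_sub_le_mul_div {K : Type*} [Semiring K] [PartialOrder K]
    [IsOrderedRing K] {a b : ℕ} {c : K} (hc : (a : K) ≤ c) :
    ((if a = 0 then 0 else b + 1 - a : ℕ) : K) ≤ c * (b / a : ℕ) := by
  split_ifs with ha
  · simp [ha]
  · have hlt := Nat.lt_div_mul_add (a := b) (Nat.pos_of_ne_zero ha)
    calc ((b + 1 - a : ℕ) : K) ≤ ((b / a * a : ℕ) : K) := Nat.mono_cast (by omega)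
      _ = a * (b / a : ℕ) := by rw [Nat.cast_mul, Nat.cast_comm]
      _ ≤ c * (b / a : ℕ) := mul_le_mul_of_nonneg_right hc (Nat.cast_nonneg _)

open MvPolynomial in
theorem diffPow_le_pow_general {k : Type*} [Field k] [CharZero k] {d : ℕ}
    (α : Fin d → ℕ)
    (I : Ideal (MvPolynomial (Fin d) k))
    (hI : I = Ideal.span
      ((fun i => (MvPolynomial.X i : MvPolynomial (Fin d) k) ^ α i) ''
        {i : Fin d | α i ≠ 0}))
    (c : ℚ) (hc1 : ∀ i, (α i : ℚ) ≤ c)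
    (n : ℕ) (cn : ℕ) (hcn : (cn : ℚ) = c * n) :
    diffPow k cn I ≤ I ^ n := by
  subst hI
  intro r hr
  rw [r.as_sum]
  refine Ideal.sum_mem _ fun γ hγ => monomial_mem_span_X_pow_pow ?_ _
  set B := ∑ i, if α i = 0 then 0 else γ i + 1 - α i
  set Q := ∑ i, γ i / α i
  have hB : cn - 1 < B := sub_one_lt_sum_of_mem_diffPow hr hγ
  have hBQ : (B : ℚ) ≤ c * Q := by
    rw [Nat.cast_sum, Nat.cast_sum, Finset.mul_sum]
    exact Finset.sum_le_sum fun i _ => Nat.cast_ite_add_one_sub_le_mul_div (hc1 i)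
  have hc : 0 < c := by
    have hB1 : (1 : ℚ) ≤ B := by exact_mod_cast (by omega : 1 ≤ B)
    exact pos_of_mul_pos_left (by linarith) (Nat.cast_nonneg Q)
  have hcnB : (cn : ℚ) ≤ B := by exact_mod_cast (by omega : cn ≤ B)
  exact_mod_cast le_of_mul_le_mul_left (by linarith : c * n ≤ c * Q) hc

/-- If `c ≥ max α_i`, `c > |supp α|` and `cn ∈ ℤ`, then `I^⟨cn⟩ ⊆ I^n` for the
pure-power ideal `I = (x_i^{α_i} : i ∈ supp α)`. -/
theorem diffPow_le_pow {k : Type*} [Field k] [CharZero k] {d : ℕ}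
    (α : Fin d → ℕ)
    (I : Ideal (MvPolynomial (Fin d) k))
    (hI : I = Ideal.span
      ((fun i => (MvPolynomial.X i : MvPolynomial (Fin d) k) ^ α i) ''
        {i : Fin d | α i ≠ 0}))
    (c : ℚ) (hc1 : ∀ i, (α i : ℚ) ≤ c)
    (hc2 : ((Finset.univ.filter fun i => α i ≠ 0).card : ℚ) < c)
    (n : ℕ) (hn : 0 < n) (cn : ℕ) (hcn : (cn : ℚ) = c * n) :
    diffPow k cn I ≤ I ^ n :=
  diffPow_le_pow_general α I hI c hc1 n cn hcn
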